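/- arXiv:2202.12876 — 3 statements merged into one kernel-verified Lean document; each statement's English description precedes it below -/
import Mathlib

section
/- Combinatorial form of Lemma 4.5 (finite stabilizers on the semistable locus, rank-two torus case): Let M := ℤ² with dual lattice N := ℤ² and N_ℝ := ℝ², with the standard pairing ⟨λ, χ⟩. Let β_1, …, β_n ∈ M, let λ_0 ∈ N satisfy ⟨λ_0, β_i⟩ < 0 for all i, and let ℓ ∈ M_ℝ := ℝ² satisfy ⟨λ_0, ℓ⟩ < 0. Call a subset S ⊆ {1, …, n} ℓ-semistable if there is no λ ∈ N with ⟨λ, ℓ⟩ < 0 and ⟨λ, β_i⟩ ≥ 0 for all i ∈ S. Then the following are equivalent: (i) no β_i is a real scalar multiple of ℓ; (ii) for every ℓ-semistable subset S there is no nonzero λ ∈ N_ℝ with ⟨λ, β_i⟩ = 0 for all i ∈ S. -/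
/-- Integral pairing on the rank-two lattice. -/
def pairZ (lam chi : Fin 2 → ℤ) : ℤ := ∑ k, lam k * chi k

/-- Real pairing between `N_ℝ = ℝ²` and `M_ℝ = ℝ²`. -/
def pairR (lam chi : Fin 2 → ℝ) : ℝ := ∑ k, lam k * chi k

/-- A subset `S` of the index set is `ℓ`-semistable if no integral cocharacter pairing
negatively with `ℓ` pairs nonnegatively with all `β_i`, `i ∈ S`. -/
def IsSemistable {n : ℕ} (β : Fin n → Fin 2 → ℤ) (ℓ : Fin 2 → ℝ) (S : Set (Fin n)) : Prop :=
  ¬ ∃ lam : Fin 2 → ℤ, pairR (fun k => (lam k : ℝ)) ℓ < 0 ∧ ∀ i ∈ S, 0 ≤ pairZ lam (β i)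

/-! In rank two a nonzero real annihilator of the weights `β_i`, `i ∈ S`, forces them onto one
line through the origin, so the quarter-turn `perp β_i` of any one of them is an *integral*
annihilator of all of them. If `β_i` is not proportional to `ℓ`, then `perp β_i` pairs nonzero
with `ℓ`, and `± perp β_i` destabilizes `S`. Conversely, if `β_i = c • ℓ`, then `c > 0` (pair
with `λ_0`), so `{i}` is semistable, and it is annihilated by `perp β_i ≠ 0`. -/

def perp {R : Type*} [Neg R] (u : Fin 2 → R) : Fin 2 → R := ![-u 1, u 0]

section Perp

variable {R : Type*} [CommRing R]

lemma perp_dotProduct (u v : Fin 2 → R) : perp u ⬝ᵥ v = u 0 * v 1 - u 1 * v 0 := by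
  simp only [perp, dotProduct, Fin.sum_univ_two, Matrix.cons_val_zero, Matrix.cons_val_one]
  ring

lemma perp_dotProduct_self (u : Fin 2 → R) : perp u ⬝ᵥ u = 0 := by
  rw [perp_dotProduct]; ring

lemma perp_eq_zero_iff {u : Fin 2 → R} : perp u = 0 ↔ u = 0 := by
  simp [perp, funext_iff, Fin.forall_fin_two, and_comm]

lemma perp_intCast (u : Fin 2 → ℤ) :
    perp (fun k => (u k : R)) = fun k => ((perp u k : ℤ) : R) := by
  ext k; fin_cases k <;> simp [perp]

end Perp

section Field

variable {K : Type*} [Field K]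

lemma perp_dotProduct_eq_zero_of_dotProduct_eq_zero {lam u v : Fin 2 → K} (hlam : lam ≠ 0)
    (hu : lam ⬝ᵥ u = 0) (hv : lam ⬝ᵥ v = 0) : perp u ⬝ᵥ v = 0 := by
  simp only [dotProduct, Fin.sum_univ_two] at hu hv
  rw [perp_dotProduct]
  have h0 : (u 0 * v 1 - u 1 * v 0) * lam 0 = 0 := by linear_combination v 1 * hu - u 1 * hv
  have h1 : (u 0 * v 1 - u 1 * v 0) * lam 1 = 0 := by linear_combination u 0 * hv - v 0 * hu
  by_contra hdet
  exact hlam (funext fun k => by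
    fin_cases k
    exacts [(mul_eq_zero.1 h0).resolve_left hdet, (mul_eq_zero.1 h1).resolve_left hdet])

lemma exists_eq_smul_of_perp_dotProduct_eq_zero {u v : Fin 2 → K} (hv : v ≠ 0)
    (h : perp u ⬝ᵥ v = 0) : ∃ c : K, u = c • v := by
  rw [perp_dotProduct] at h
  by_cases hv0 : v 0 = 0
  · have hv1 : v 1 ≠ 0 := fun hv1 => hv (funext fun k => by fin_cases k <;> assumption)
    refine ⟨u 1 / v 1, funext fun k => ?_⟩
    fin_cases k <;> simp only [Fin.zero_eta, Fin.mk_one, Pi.smul_apply, smul_eq_mul] <;> field_simp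
    linear_combination h
  · refine ⟨u 0 / v 0, funext fun k => ?_⟩
    fin_cases k <;> simp only [Fin.zero_eta, Fin.mk_one, Pi.smul_apply, smul_eq_mul] <;> field_simp
    linear_combination -h

end Field

section Semistable

variable {n : ℕ} {β : Fin n → Fin 2 → ℤ} {ℓ : Fin 2 → ℝ} {S : Set (Fin n)}

lemma pairR_intCast (lam chi : Fin 2 → ℤ) :
    pairR (fun k => (lam k : ℝ)) (fun k => (chi k : ℝ)) = pairZ lam chi := by
  simp [pairR, pairZ]

lemma pairR_smul_right (lam chi : Fin 2 → ℝ) (c : ℝ) :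
    pairR lam (c • chi) = c * pairR lam chi :=
  dotProduct_smul c lam chi

lemma IsSemistable.nonempty {lam0 : Fin 2 → ℤ} (hS : IsSemistable β ℓ S)
    (hℓ : pairR (fun k => (lam0 k : ℝ)) ℓ < 0) : S.Nonempty := by
  by_contra hempty
  exact hS ⟨lam0, hℓ, fun i hi => (hempty ⟨i, hi⟩).elim⟩

lemma IsSemistable.pairR_eq_zero_of_pairZ_eq_zero (hS : IsSemistable β ℓ S) {mu : Fin 2 → ℤ}
    (hmu : ∀ i ∈ S, pairZ mu (β i) = 0) : pairR (fun k => (mu k : ℝ)) ℓ = 0 := by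
  rcases lt_trichotomy (pairR (fun k => (mu k : ℝ)) ℓ) 0 with hneg | hzero | hpos
  · exact (hS ⟨mu, hneg, fun i hi => (hmu i hi).ge⟩).elim
  · exact hzero
  · refine (hS ⟨-mu, ?_, fun i hi => ?_⟩).elim
    · simp only [pairR, Pi.neg_apply, Int.cast_neg, neg_mul, Finset.sum_neg_distrib] at hpos ⊢
      linarith
    · simp only [pairZ, Pi.neg_apply, neg_mul, Finset.sum_neg_distrib]
      exact neg_nonneg.2 (hmu i hi).le

lemma IsSemistable.exists_eq_smul_of_annihilator (hS : IsSemistable β ℓ S) (hℓ : ℓ ≠ 0)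
    {lam : Fin 2 → ℝ} (hlam : lam ≠ 0) (hann : ∀ i ∈ S, pairR lam (fun k => (β i k : ℝ)) = 0)
    {i : Fin n} (hi : i ∈ S) : ∃ c : ℝ, (fun k => (β i k : ℝ)) = c • ℓ := by
  refine exists_eq_smul_of_perp_dotProduct_eq_zero hℓ ?_
  rw [perp_intCast]
  refine hS.pairR_eq_zero_of_pairZ_eq_zero fun j hj => ?_
  have hcollinear := perp_dotProduct_eq_zero_of_dotProduct_eq_zero hlam (hann i hi) (hann j hj)
  rw [perp_intCast] at hcollinear
  exact_mod_cast (pairR_intCast _ _).symm.trans hcollinear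

lemma isSemistable_singleton_of_eq_smul {i : Fin n} {c : ℝ} (hc : 0 < c)
    (hβ : (fun k => (β i k : ℝ)) = c • ℓ) : IsSemistable β ℓ {i} := by
  rintro ⟨lam, hlam, hnonneg⟩
  have hβlam : (0 : ℝ) ≤ pairR (fun k => (lam k : ℝ)) (c • ℓ) := by
    rw [← hβ, pairR_intCast]; exact_mod_cast hnonneg i rfl
  rw [pairR_smul_right] at hβlam
  exact (mul_neg_of_pos_of_neg hc hlam).not_ge hβlam

end Semistable

/-- combinatorial form of Lemma 4.5: no weight is proportional to `ℓ`
iff every `ℓ`-semistable support has no nonzero real annihilator (finite stabilizers). -/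
theorem finite_stabilizers_iff_no_weight_proportional {n : ℕ}
    (β : Fin n → Fin 2 → ℤ) (lam0 : Fin 2 → ℤ)
    (hlam0 : ∀ i, pairZ lam0 (β i) < 0)
    (ℓ : Fin 2 → ℝ) (hℓ : pairR (fun k => (lam0 k : ℝ)) ℓ < 0) :
    (∀ i, ¬ ∃ c : ℝ, (fun k => ((β i k : ℝ))) = c • ℓ) ↔
      (∀ S : Set (Fin n), IsSemistable β ℓ S →
        ¬ ∃ lam : Fin 2 → ℝ, lam ≠ 0 ∧ ∀ i ∈ S, pairR lam (fun k => ((β i k : ℝ))) = 0) := by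
  have hℓ0 : ℓ ≠ 0 := by rintro rfl; simp [pairR] at hℓ
  constructor
  · rintro hprop S hS ⟨lam, hlam, hann⟩
    obtain ⟨i, hi⟩ := hS.nonempty hℓ
    exact hprop i (hS.exists_eq_smul_of_annihilator hℓ0 hlam hann hi)
  · rintro hfinite i ⟨c, hc⟩
    have hβi : pairR (fun k => (lam0 k : ℝ)) (c • ℓ) < 0 := by
      rw [← hc, pairR_intCast]; exact_mod_cast hlam0 i
    rw [pairR_smul_right] at hβi
    have hc0 : 0 < c := pos_of_mul_neg_left hβi hℓ.le
    refine hfinite {i} (isSemistable_singleton_of_eq_smul hc0 hc)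
      ⟨perp fun k => (β i k : ℝ), ?_, ?_⟩
    · rw [Ne, perp_eq_zero_iff, hc]
      exact smul_ne_zero hc0.ne' hℓ0
    · rintro j rfl
      exact perp_dotProduct_self _
end

section
/- Combinatorial form of the second assertion of Lemma 4.5: Let M := ℤ² with dual lattice N := ℤ² and N_ℝ := ℝ², with the standard pairing ⟨λ, χ⟩. Let ℓ ∈ M_ℝ := ℝ² be nonzero and let β_1, …, β_n ∈ M be such that no β_i is a real scalar multiple of ℓ. Then for every nonzero λ' ∈ N_ℝ with ⟨λ', ℓ⟩ = 0 there exists λ ∈ N with ⟨λ, ℓ⟩ < 0 such that for every i ∈ {1, …, n}: ⟨λ, β_i⟩ > 0 if and only if ⟨λ', β_i⟩ > 0, and ⟨λ, β_i⟩ < 0 if and only if ⟨λ', β_i⟩ < 0. (In particular {i : ⟨λ, β_i⟩ ≥ 0} = {i : ⟨λ', β_i⟩ ≥ 0}.) -/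
/-!
Because the torus has rank two, `λ' ⊥ ℓ` forces `⟨λ', β⟩ = 0` only for `β ∥ ℓ`, so `λ'` pairs
nontrivially with every weight. The cocharacters `x` with `⟨x, ℓ⟩ < 0` and `⟨x, β_i⟩` of the same
sign as `⟨λ', β_i⟩` then form an open cone, which is nonempty since it contains `λ' - tℓ` for small
`t > 0`. A nonempty open cone contains an integral point: once it contains a ball of radius `> 1/2`
(sup norm), rounding the centre lands inside it.
-/

open Filter Topology

lemma pairR_eq_dotProduct (lam chi : Fin 2 → ℝ) : pairR lam chi = lam ⬝ᵥ chi := rfl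

lemma continuous_pairR_left (chi : Fin 2 → ℝ) : Continuous fun lam => pairR lam chi := by
  unfold pairR
  fun_prop

lemma cross_eq_zero_of_pairR_eq_zero {lam ℓ v : Fin 2 → ℝ} (hlam : lam ≠ 0)
    (hℓ : pairR lam ℓ = 0) (hv : pairR lam v = 0) : ℓ 0 * v 1 - ℓ 1 * v 0 = 0 := by
  obtain ⟨k, hk⟩ := Function.ne_iff.mp hlam
  refine (mul_eq_zero.mp ?_).resolve_left hk
  simp only [pairR, Fin.sum_univ_two] at hℓ hv
  fin_cases k <;> simp only [Fin.zero_eta, Fin.mk_one]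
  · linear_combination v 1 * hℓ - ℓ 1 * hv
  · linear_combination ℓ 0 * hv - v 0 * hℓ

lemma exists_eq_smul_of_cross_eq_zero {ℓ v : Fin 2 → ℝ} (hℓ : ℓ ≠ 0)
    (hcross : ℓ 0 * v 1 - ℓ 1 * v 0 = 0) : ∃ c : ℝ, v = c • ℓ := by
  obtain ⟨k, hk⟩ := Function.ne_iff.mp hℓ
  refine ⟨v k / ℓ k, funext fun j => ?_⟩
  rw [Pi.smul_apply, smul_eq_mul, div_mul_eq_mul_div, eq_div_iff hk]
  fin_cases k <;> fin_cases j <;> simp <;> linarith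

lemma exists_intCast_mem_of_isOpen_of_smul_mem {ι : Type*} [Fintype ι] {U : Set (ι → ℝ)}
    (hU : IsOpen U) (hsmul : ∀ c : ℝ, 0 < c → ∀ x ∈ U, c • x ∈ U) (hne : U.Nonempty) :
    ∃ z : ι → ℤ, (fun k => (z k : ℝ)) ∈ U := by
  obtain ⟨x, hx⟩ := hne
  obtain ⟨ε, hε, hball⟩ := Metric.isOpen_iff.mp hU x hx
  obtain ⟨N, hN⟩ := exists_nat_gt (1 / (2 * ε))
  have hNpos : (0 : ℝ) < N := lt_trans (by positivity) hN
  have hNε : 1 / 2 < N * ε := by rw [div_lt_iff₀ (by positivity)] at hN; linarith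
  refine ⟨fun k => round (N * x k), ?_⟩
  have hclose : (N : ℝ)⁻¹ • (fun k => (round (N * x k) : ℝ)) ∈ U := by
    refine hball ?_
    rw [Metric.mem_ball, dist_eq_norm, pi_norm_lt_iff hε]
    intro k
    calc ‖((N : ℝ)⁻¹ • fun k => (round (N * x k) : ℝ)) k - x k‖
        = |(N : ℝ)⁻¹ * (N * x k - round (N * x k))| := by
          rw [Real.norm_eq_abs, ← abs_neg]
          congr 1
          simp only [Pi.smul_apply, smul_eq_mul]
          field_simp
          ring
      _ = (N : ℝ)⁻¹ * |N * x k - round (N * x k)| := by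
          rw [abs_mul, abs_of_pos (inv_pos.mpr hNpos)]
      _ ≤ (N : ℝ)⁻¹ * (1 / 2) := by gcongr; exact abs_sub_round _
      _ < ε := by rw [inv_mul_lt_iff₀ hNpos]; linarith
  simpa [smul_smul, hNpos.ne'] using hsmul N hNpos _ hclose

lemma exists_dotProduct_neg_of_mem_nhds {ι : Type*} [Fintype ι] {ℓ v : ι → ℝ} (hℓ : ℓ ≠ 0)
    (hv : v ⬝ᵥ ℓ ≤ 0) {U : Set (ι → ℝ)} (hU : U ∈ 𝓝 v) : ∃ x ∈ U, x ⬝ᵥ ℓ < 0 := by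
  have hlim : Tendsto (fun t : ℝ => v - t • ℓ) (𝓝[>] 0) (𝓝 v) := by
    have : Continuous fun t : ℝ => v - t • ℓ := by fun_prop
    simpa using (this.tendsto 0).mono_left nhdsWithin_le_nhds
  obtain ⟨t, hU_t, ht⟩ := ((hlim.eventually hU).and self_mem_nhdsWithin).exists
  have hℓℓ : 0 < ℓ ⬝ᵥ ℓ := by simpa using Matrix.dotProduct_self_star_pos_iff.mpr hℓ
  refine ⟨_, hU_t, ?_⟩
  rw [sub_dotProduct, smul_dotProduct, smul_eq_mul]
  nlinarith [mul_pos (Set.mem_Ioi.mp ht) hℓℓ]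

/-- combinatorial form of the second assertion of Lemma 4.5: any nonzero
real cocharacter `λ'` orthogonal to `ℓ` can be replaced by an integral cocharacter `λ`
with `⟨λ, ℓ⟩ < 0` whose pairings with the weights have the same signs as those of `λ'`. -/
theorem perturb_orthogonal_cocharacter {n : ℕ}
    (ℓ : Fin 2 → ℝ) (hℓ : ℓ ≠ 0)
    (β : Fin n → Fin 2 → ℤ)
    (hβ : ∀ i, ¬ ∃ c : ℝ, (fun k => ((β i k : ℝ))) = c • ℓ)
    (lam' : Fin 2 → ℝ) (hlam'ne : lam' ≠ 0) (hlam'perp : pairR lam' ℓ = 0) :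
    ∃ lam : Fin 2 → ℤ, pairR (fun k => (lam k : ℝ)) ℓ < 0 ∧
      ∀ i, (0 < pairR (fun k => (lam k : ℝ)) (fun k => ((β i k : ℝ))) ↔
              0 < pairR lam' (fun k => ((β i k : ℝ)))) ∧
           (pairR (fun k => (lam k : ℝ)) (fun k => ((β i k : ℝ))) < 0 ↔
              pairR lam' (fun k => ((β i k : ℝ))) < 0) := by
  set w : Fin n → Fin 2 → ℝ := fun i k => (β i k : ℝ)
  have hw : ∀ i, pairR lam' (w i) ≠ 0 := fun i h =>
    hβ i (exists_eq_smul_of_cross_eq_zero hℓ (cross_eq_zero_of_pairR_eq_zero hlam'ne hlam'perp h))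
  set S : Set (Fin 2 → ℝ) := {x | ∀ i, 0 < pairR lam' (w i) * pairR x (w i)}
  have hS : IsOpen S := by
    simp only [S, Set.ofPred_forall]
    exact isOpen_iInter_of_finite fun i =>
      isOpen_lt continuous_const ((continuous_pairR_left _).const_mul _)
  set C : Set (Fin 2 → ℝ) := {x | pairR x ℓ < 0} ∩ S
  have hC_open : IsOpen C := (isOpen_lt (continuous_pairR_left ℓ) continuous_const).inter hS
  have hC_smul : ∀ c : ℝ, 0 < c → ∀ x ∈ C, c • x ∈ C := by
    rintro c hc x ⟨hxℓ, hxw⟩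
    simp only [C, S, Set.mem_inter_iff, Set.mem_ofPred_eq, pairR_eq_dotProduct, smul_dotProduct,
      smul_eq_mul] at hxℓ hxw ⊢
    exact ⟨mul_neg_of_pos_of_neg hc hxℓ, fun i => by nlinarith [hxw i]⟩
  have hC_ne : C.Nonempty := by
    obtain ⟨x, hxS, hxℓ⟩ := exists_dotProduct_neg_of_mem_nhds hℓ hlam'perp.le
      (hS.mem_nhds fun i => mul_self_pos.mpr (hw i))
    exact ⟨x, hxℓ, hxS⟩
  obtain ⟨lam, hlamℓ, hlamw⟩ := exists_intCast_mem_of_isOpen_of_smul_mem hC_open hC_smul hC_ne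
  exact ⟨lam, hlamℓ, fun i =>
    ⟨(pos_iff_pos_of_mul_pos (hlamw i)).symm, (neg_iff_neg_of_mul_pos (hlamw i)).symm⟩⟩
end

section
/- Claim 4.3 in the case of trivial Weyl group (ρ = 0): Suppose χ ∈ M_ℝ satisfies ⟨λ', χ − θ⟩ ≤ 0, r_χ ≥ 1/2, and Q < ⟨λ_0, χ − θ⟩ ≤ η_0/2. Let S ⊆ {1, …, n} be nonempty with ⟨λ', β_i⟩ > 0 for all i ∈ S, and set μ := χ + ∑_{i∈S} β_i. Then |⟨λ_0, μ − θ⟩| ≤ η_0/2, and r_μ ≤ r_χ, with strict inequality r_μ < r_χ whenever r_χ > 1/2. -/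
noncomputable section

/-- `D := −∑_{i : ⟨λ', β_i⟩ ≤ 0} ⟨λ', β_i⟩`. -/
def Dval {n : ℕ} (β : Fin n → Fin 2 → ℝ) (lam' : Fin 2 → ℝ) : ℝ :=
  -∑ i ∈ Finset.univ.filter (fun i => pairR lam' (β i) ≤ 0), pairR lam' (β i)

/-- `Q := η_0/2 + ∑_{i : ⟨λ', β_i⟩ < 0} ⟨λ_0, β_i⟩`, where `η_0 = −∑_i ⟨λ_0, β_i⟩`. -/
def Qval {n : ℕ} (β : Fin n → Fin 2 → ℝ) (lam0 lam' : Fin 2 → ℝ) : ℝ :=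
  (-∑ i, pairR lam0 (β i)) / 2 +
    ∑ i ∈ Finset.univ.filter (fun i => pairR lam' (β i) < 0), pairR lam0 (β i)

/-- r_nu := |pair(lam0-orthogonal lam', nu - theta)| / D. -/
def rval {n : ℕ} (β : Fin n → Fin 2 → ℝ) (lam' θ ν : Fin 2 → ℝ) : ℝ :=
  |pairR lam' (ν - θ)| / Dval β lam'

/-!
Adding the `β i` with `⟨λ', β i⟩ > 0` moves `⟨λ', · - θ⟩` to the right by at most `D`, because
`⟨λ', ω*⟩ = 0` makes `D` also the sum of the positive pairings. Starting at `x ≤ -D/2`, the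
value `x + P` with `0 ≤ P ≤ D` stays in `[x, -x]`, so `r` does not grow. On the `λ_0` side the
added pairings are negative and disjoint from those entering `Q`, so together with them they
are bounded below by the full sum `-η_0`.
-/

open Finset

theorem Finset.neg_sum_filter_nonpos_eq_sum_filter_pos {ι α : Type*} [AddCommGroup α]
    [LinearOrder α] (s : Finset ι) (f : ι → α) (h : ∑ i ∈ s, f i = 0) :
    -∑ i ∈ s with f i ≤ 0, f i = ∑ i ∈ s with 0 < f i, f i := by
  have hsplit := sum_filter_add_sum_filter_not s (fun i => f i ≤ 0) f
  simp only [not_le, h] at hsplit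
  exact neg_eq_of_add_eq_zero_right hsplit

lemma pairR_sum {ι : Type*} (lam : Fin 2 → ℝ) (s : Finset ι) (v : ι → Fin 2 → ℝ) :
    pairR lam (∑ i ∈ s, v i) = ∑ i ∈ s, pairR lam (v i) :=
  dotProduct_sum lam s v

lemma pairR_add_sum_sub {ι : Type*} (lam χ θ : Fin 2 → ℝ) (s : Finset ι)
    (v : ι → Fin 2 → ℝ) :
    pairR lam (χ + ∑ i ∈ s, v i - θ) = pairR lam (χ - θ) + ∑ i ∈ s, pairR lam (v i) := by
  rw [← pairR_sum, add_sub_right_comm]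
  exact dotProduct_add lam (χ - θ) (∑ i ∈ s, v i)

lemma sum_pairR_le_Dval {n : ℕ} {β : Fin n → Fin 2 → ℝ} {lam' : Fin 2 → ℝ}
    (hω : pairR lam' (∑ i, β i) = 0) {S : Finset (Fin n)}
    (hS : ∀ i ∈ S, 0 < pairR lam' (β i)) :
    ∑ i ∈ S, pairR lam' (β i) ≤ Dval β lam' := by
  rw [pairR_sum] at hω
  rw [Dval, neg_sum_filter_nonpos_eq_sum_filter_pos _ _ hω]
  exact sum_le_sum_of_subset_of_nonneg (fun i hi => by simp [hS i hi])
    fun i hi _ => (mem_filter.1 hi).2.le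

lemma abs_pairR_add_sum_sub_le {n : ℕ} {β : Fin n → Fin 2 → ℝ} {lam0 lam' θ χ : Fin 2 → ℝ}
    (hlam0 : ∀ i, pairR lam0 (β i) ≤ 0) (hQ : Qval β lam0 lam' < pairR lam0 (χ - θ))
    (hη : pairR lam0 (χ - θ) ≤ (-∑ i, pairR lam0 (β i)) / 2) {S : Finset (Fin n)}
    (hS : ∀ i ∈ S, 0 ≤ pairR lam' (β i)) :
    |pairR lam0 (χ + ∑ i ∈ S, β i - θ)| ≤ (-∑ i, pairR lam0 (β i)) / 2 := by
  have hdisj : Disjoint S ({i | pairR lam' (β i) < 0} : Finset (Fin n)) :=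
    disjoint_left.2 fun i hi hneg => (hS i hi).not_gt (mem_filter.1 hneg).2
  have hfull : ∑ i, pairR lam0 (β i) ≤
      ∑ i ∈ S, pairR lam0 (β i) + ∑ i with pairR lam' (β i) < 0, pairR lam0 (β i) := by
    rw [← sum_union hdisj]
    exact sum_le_sum_of_subset_of_nonpos' (subset_univ _) fun i _ _ => hlam0 i
  have hS0 : ∑ i ∈ S, pairR lam0 (β i) ≤ 0 := sum_nonpos fun i _ => hlam0 i
  rw [Qval] at hQ
  rw [pairR_add_sum_sub, abs_le]
  constructor <;> linarith

lemma pos_of_pos_abs_div {x D : ℝ} (h : 0 < |x| / D) : 0 < D := by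
  by_contra! hD
  exact h.not_ge (div_nonpos_of_nonneg_of_nonpos (abs_nonneg x) hD)

lemma abs_add_div_le_abs_div {x p D : ℝ} (hx : x ≤ 0) (hp : 0 ≤ p) (hpD : p ≤ D)
    (hr : 1 / 2 ≤ |x| / D) : |x + p| / D ≤ |x| / D := by
  have hD : 0 < D := pos_of_pos_abs_div (one_half_pos.trans_le hr)
  rw [abs_of_nonpos hx, le_div_iff₀ hD] at hr ⊢
  rw [div_mul_cancel₀ _ hD.ne']
  exact abs_le.2 ⟨by linarith, by linarith⟩

lemma abs_add_div_lt_abs_div {x p D : ℝ} (hx : x ≤ 0) (hp : 0 < p) (hpD : p ≤ D)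
    (hr : 1 / 2 < |x| / D) : |x + p| / D < |x| / D := by
  have hD : 0 < D := pos_of_pos_abs_div (one_half_pos.trans hr)
  rw [abs_of_nonpos hx, lt_div_iff₀ hD] at hr ⊢
  rw [div_mul_cancel₀ _ hD.ne']
  exact abs_lt.2 ⟨by linarith, by linarith⟩

theorem claim_4_3_trivial_weyl_general {n : ℕ}
    (β : Fin n → Fin 2 → ℝ)
    (lam0 : Fin 2 → ℝ) (hlam0 : ∀ i, pairR lam0 (β i) < 0)
    (lam' : Fin 2 → ℝ)
    (hlam'ω : pairR lam' (∑ i, β i) = 0)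
    (θ : Fin 2 → ℝ)
    (χ : Fin 2 → ℝ)
    (hχ1 : pairR lam' (χ - θ) ≤ 0)
    (hχ2 : 1 / 2 ≤ rval β lam' θ χ)
    (hχ3 : Qval β lam0 lam' < pairR lam0 (χ - θ))
    (hχ4 : pairR lam0 (χ - θ) ≤ (-∑ i, pairR lam0 (β i)) / 2)
    (S : Finset (Fin n)) (hS : S.Nonempty)
    (hSpos : ∀ i ∈ S, 0 < pairR lam' (β i))
    (μ : Fin 2 → ℝ) (hμ : μ = χ + ∑ i ∈ S, β i) :
    |pairR lam0 (μ - θ)| ≤ (-∑ i, pairR lam0 (β i)) / 2 ∧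
      rval β lam' θ μ ≤ rval β lam' θ χ ∧
      (1 / 2 < rval β lam' θ χ → rval β lam' θ μ < rval β lam' θ χ) := by
  subst hμ
  have hPD : ∑ i ∈ S, pairR lam' (β i) ≤ Dval β lam' := sum_pairR_le_Dval hlam'ω hSpos
  have hP : 0 < ∑ i ∈ S, pairR lam' (β i) := sum_pos hSpos hS
  have hrμ : rval β lam' θ (χ + ∑ i ∈ S, β i) =
      |pairR lam' (χ - θ) + ∑ i ∈ S, pairR lam' (β i)| / Dval β lam' := by
    rw [rval, pairR_add_sum_sub]
  rw [hrμ]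
  exact ⟨abs_pairR_add_sum_sub_le (fun i => (hlam0 i).le) hχ3 hχ4 fun i hi => (hSpos i hi).le,
    abs_add_div_le_abs_div hχ1 hP.le hPD hχ2, abs_add_div_lt_abs_div hχ1 hP hPD⟩

/-- Claim 4.3 with trivial Weyl group. -/
theorem claim_4_3_trivial_weyl {n : ℕ} (hn : 1 ≤ n)
    (β : Fin n → Fin 2 → ℝ)
    (hβint : ∀ i, ∃ b : Fin 2 → ℤ, β i = fun k => ((b k : ℝ)))
    (hspan : Submodule.span ℝ (Set.range β) = ⊤)
    (lam0 : Fin 2 → ℝ) (hlam0 : ∀ i, pairR lam0 (β i) < 0)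
    (lam' : Fin 2 → ℝ) (hlam'ne : lam' ≠ 0)
    (hlam'ω : pairR lam' (∑ i, β i) = 0)
    (θ : Fin 2 → ℝ)
    (χ : Fin 2 → ℝ)
    (hχ1 : pairR lam' (χ - θ) ≤ 0)
    (hχ2 : 1 / 2 ≤ rval β lam' θ χ)
    (hχ3 : Qval β lam0 lam' < pairR lam0 (χ - θ))
    (hχ4 : pairR lam0 (χ - θ) ≤ (-∑ i, pairR lam0 (β i)) / 2)
    (S : Finset (Fin n)) (hS : S.Nonempty)
    (hSpos : ∀ i ∈ S, 0 < pairR lam' (β i))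
    (μ : Fin 2 → ℝ) (hμ : μ = χ + ∑ i ∈ S, β i) :
    |pairR lam0 (μ - θ)| ≤ (-∑ i, pairR lam0 (β i)) / 2 ∧
      rval β lam' θ μ ≤ rval β lam' θ χ ∧
      (1 / 2 < rval β lam' θ χ → rval β lam' θ μ < rval β lam' θ χ) :=
  claim_4_3_trivial_weyl_general β lam0 hlam0 lam' hlam'ω θ χ hχ1 hχ2 hχ3 hχ4 S hS hSpos μ hμ
end
end
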